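/- In the augmented MDP, for every non-absorbing state x and every real action a ∈ A, the Bellman equation for the extended policy π̄ can be written purely in terms of original-MDP quantities: Q̄^{π̄}(x,a) = γ · E_{x' ∼ P₀(·|x,a)}[ max(R(x'), Q^π(x', π)) ], where P₀ is the original (non-terminating) transition kernel; moreover Q̄^{π̄}(x, a⁺) = R(x) for all non-absorbing x, and Q̄^{π̄}(s⁺, a) = 0 for all a. -/
import Mathlib


open scoped ENNReal
open Classical

/-- Expectation of a real-valued function under a probability mass function. -/
noncomputable def pexp {σ : Type*} (p : PMF σ) (φ : σ → ℝ) : ℝ :=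
  ∑' s, (p s).toReal * φ s

section helpers
variable {σ : Type*} [Fintype σ]

lemma pexp_eq_sum (p : PMF σ) (φ : σ → ℝ) :
    pexp p φ = ∑ s, (p s).toReal * φ s := tsum_fintype _

lemma sum_toReal_pmf (p : PMF σ) : ∑ s, (p s).toReal = 1 := by
  have h2 : (∑' s, p s).toReal = ∑' s, (p s).toReal :=
    ENNReal.tsum_toReal_eq (fun s => p.apply_ne_top s)
  rw [p.tsum_coe, tsum_fintype] at h2
  simpa using h2.symm

lemma pexp_const (p : PMF σ) (c : ℝ) : pexp p (fun _ => c) = c := by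
  rw [pexp_eq_sum, ← Finset.sum_mul, sum_toReal_pmf, one_mul]

lemma pexp_mono (p : PMF σ) {φ ψ : σ → ℝ} (h : ∀ s, φ s ≤ ψ s) :
    pexp p φ ≤ pexp p ψ := by
  rw [pexp_eq_sum, pexp_eq_sum]
  exact Finset.sum_le_sum fun s _ => mul_le_mul_of_nonneg_left (h s) ENNReal.toReal_nonneg

lemma pexp_le_of_le (p : PMF σ) {φ : σ → ℝ} {c : ℝ} (h : ∀ s, φ s ≤ c) :
    pexp p φ ≤ c := by
  have := pexp_mono p h
  rwa [pexp_const] at this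

lemma le_pexp_of_le (p : PMF σ) {φ : σ → ℝ} {c : ℝ} (h : ∀ s, c ≤ φ s) :
    c ≤ pexp p φ := by
  have := pexp_mono p h
  rwa [pexp_const] at this

lemma abs_pexp_le (p : PMF σ) {φ : σ → ℝ} {c : ℝ} (h : ∀ s, |φ s| ≤ c) :
    |pexp p φ| ≤ c := by
  rw [abs_le]
  exact ⟨le_pexp_of_le p fun s => (abs_le.mp (h s)).1,
         pexp_le_of_le p fun s => (abs_le.mp (h s)).2⟩

omit [Fintype σ] in
lemma pexp_congr (p : PMF σ) {φ ψ : σ → ℝ} (h : ∀ s, φ s = ψ s) :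
    pexp p φ = pexp p ψ := by
  have : φ = ψ := funext h
  rw [this]

lemma pexp_sub (p : PMF σ) (φ ψ : σ → ℝ) :
    pexp p (fun s => φ s - ψ s) = pexp p φ - pexp p ψ := by
  simp only [pexp_eq_sum, mul_sub, Finset.sum_sub_distrib]

lemma pexp_pure (s0 : σ) (φ : σ → ℝ) : pexp (PMF.pure s0) φ = φ s0 := by
  rw [pexp_eq_sum]
  simp [PMF.pure_apply, apply_ite ENNReal.toReal, Finset.sum_ite_eq]

lemma pexp_map_some {X : Type*} [Fintype X] (p : PMF X) (φ : Option X → ℝ) :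
    pexp (p.map some) φ = pexp p (fun x => φ (some x)) := by
  rw [pexp_eq_sum, pexp_eq_sum, Fintype.sum_option]
  have h0 : (p.map some) none = 0 := by
    simp [PMF.map_apply]
  have hs : ∀ x, (p.map some) (some x) = p x := by
    intro x
    rw [PMF.map_apply]
    simp only [eq_comm (a := some x)]
    rw [tsum_eq_single x (by intro b hb; simp [Option.some_inj, hb])]
    simp
  simp [h0, hs]

end helpers

/-- Transition kernel of the action-augmented MDP: states `Option X` (with `none` the
absorbing state `s⁺`), actions `Option A` (with `none` the fictitious action `a⁺`).
Taking `a⁺` always transitions to `s⁺`; real actions follow the original dynamics;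
`s⁺` is absorbing. -/
noncomputable def augP {X A : Type*} (P : X → A → PMF X) :
    Option X → Option A → PMF (Option X)
  | some x, some a => (P x a).map some
  | _, _ => PMF.pure none

/-- Reward of the action-augmented MDP: reward `1` exactly when taking the fictitious
action `a⁺` at a goal state; all other rewards are `0`. -/
noncomputable def augR {X A : Type*} (G : Set X) : Option X → Option A → ℝ
  | some x, none => if x ∈ G then 1 else 0
  | _, _ => 0

/-- Extension `π̄` of a policy `π` to the augmented MDP: play the fictitious action `a⁺`
exactly on goal states, otherwise follow `π`. -/
noncomputable def extPi {X A : Type*} (G : Set X) (π : X → PMF A) :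
    Option X → PMF (Option A)
  | some x => if x ∈ G then PMF.pure none else (π x).map some
  | none => PMF.pure none

/-- In the augmented MDP, the Bellman equation of the extended policy
`π̄` can be written purely in original-MDP quantities: for every non-absorbing state `x`
and real action `a ∈ A`,
`Q̄^{π̄}(x,a) = γ · E_{x' ∼ P₀(·|x,a)}[max(R(x'), Q^π(x',π))]` where `P₀` is the original
transition kernel and `R(x') = 1(x' ∈ G)`; moreover `Q̄^{π̄}(x, a⁺) = R(x)` for all
non-absorbing `x`, and `Q̄^{π̄}(s⁺, a) = 0` for all actions `a`. -/
theorem stmt6 {X A : Type*} [Fintype X] [Fintype A]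
    (G : Set X) (P : X → A → PMF X) (π : X → PMF A)
    (γ : ℝ) (hγ0 : 0 ≤ γ) (hγ1 : γ < 1)
    (Q : X → A → ℝ) (Qb : Option X → Option A → ℝ)
    (hQ : ∀ x a, Q x a =
      if x ∈ G then 1 else γ * pexp (P x a) (fun x' => pexp (π x') (Q x')))
    (hQb : ∀ ox oa, Qb ox oa =
      augR G ox oa + γ * pexp (augP P ox oa) (fun ox' => pexp (extPi G π ox') (Qb ox'))) :
    (∀ (x : X) (a : A), Qb (some x) (some a)
        = γ * pexp (P x a) (fun x' =>
            max (if x' ∈ G then (1 : ℝ) else 0) (pexp (π x') (Q x')))) ∧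
    (∀ x : X, Qb (some x) none = if x ∈ G then (1 : ℝ) else 0) ∧
    (∀ oa : Option A, Qb none oa = 0) := by
  -- Step A : absorbing state has value 0
  have hA : ∀ oa : Option A, Qb none oa = 0 := by
    have hrec : ∀ oa : Option A, Qb none oa = γ * Qb none none := by
      intro oa
      have h := hQb none oa
      have haugR : augR (A := A) G none oa = 0 := by cases oa <;> rfl
      have haugP : augP P none oa = PMF.pure none := by cases oa <;> rfl
      rw [haugR, haugP, pexp_pure] at h
      simp only [extPi, pexp_pure] at h
      simpa using h
    have h0 : Qb none none = 0 := by
      have h := hrec none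
      have h2 : Qb none none * (1 - γ) = 0 := by linarith
      rcases mul_eq_zero.mp h2 with h | h
      · exact h
      · linarith
    intro oa; rw [hrec oa, h0, mul_zero]
  -- Step B : value of the fictitious action on real states
  have hB : ∀ x : X, Qb (some x) none = if x ∈ G then (1 : ℝ) else 0 := by
    intro x
    have h := hQb (some x) none
    have haugP : augP P (some x) none = PMF.pure none := rfl
    rw [haugP, pexp_pure] at h
    simp only [extPi, pexp_pure, hA none] at h
    simpa [augR] using h
  -- Key Bellman form for real actions in the augmented MDP
  have key : ∀ (x : X) (a : A), Qb (some x) (some a)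
      = γ * pexp (P x a) (fun x' => if x' ∈ G then 1
          else pexp (π x') (fun a' => Qb (some x') (some a'))) := by
    intro x a
    have h := hQb (some x) (some a)
    have haugP : augP P (some x) (some a) = (P x a).map some := rfl
    rw [haugP, pexp_map_some] at h
    have : (fun x' => pexp (extPi G π (some x')) (Qb (some x')))
        = (fun x' => if x' ∈ G then 1
            else pexp (π x') (fun a' => Qb (some x') (some a'))) := by
      funext x'
      by_cases hx : x' ∈ G
      · simp [extPi, hx, pexp_pure, hB x']
      · simp [extPi, hx, pexp_map_some]
    rw [this] at h
    simpa [augR] using h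
  refine ⟨?_, hB, hA⟩
  intro x a
  haveI : Nonempty X := ⟨x⟩
  haveI : Nonempty A := ⟨a⟩
  have huniv : (Finset.univ : Finset (X × A)).Nonempty := Finset.univ_nonempty
  -- pexp of Q over π equals 1 on goal states
  have hQG : ∀ x' ∈ G, pexp (π x') (Q x') = 1 := by
    intro x' hx'
    have : Q x' = fun _ => 1 := by funext a'; rw [hQ x' a', if_pos hx']
    rw [this, pexp_const]
  -- Step C : Q is nonnegative
  have hQnn : ∀ (x' : X) (a' : A), 0 ≤ Q x' a' := by
    set m := Finset.inf' Finset.univ huniv (fun p : X × A => Q p.1 p.2) with hm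
    set m0 := min m 0 with hm0
    have hm0le : m0 ≤ 0 := min_le_right _ _
    have hlow : ∀ (x' : X) (a' : A), γ * m0 ≤ Q x' a' := by
      intro x' a'
      rw [hQ x' a']
      by_cases hx : x' ∈ G
      · rw [if_pos hx]
        nlinarith
      · rw [if_neg hx]
        refine mul_le_mul_of_nonneg_left ?_ hγ0
        refine le_pexp_of_le _ fun x'' => ?_
        refine le_pexp_of_le _ fun a'' => ?_
        calc m0 ≤ m := min_le_left _ _
          _ ≤ Q x'' a'' := Finset.inf'_le _ (Finset.mem_univ (x'', a''))
    have hmlow : γ * m0 ≤ m := by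
      rw [hm]
      exact Finset.le_inf' _ _ fun p _ => hlow p.1 p.2
    have hm0ge : γ * m0 ≤ m0 := by
      rw [hm0]
      refine le_min hmlow (by nlinarith)
    have hm00 : 0 ≤ m0 := by nlinarith
    intro x' a'
    calc (0 : ℝ) ≤ m0 := hm00
      _ ≤ m := min_le_left _ _
      _ ≤ Q x' a' := Finset.inf'_le _ (Finset.mem_univ (x', a'))
  -- Step D : Qb agrees with Q on non-goal real states / real actions
  have hD : ∀ (x' : X) (a' : A), x' ∉ G → Qb (some x') (some a') = Q x' a' := by
    set d : X → A → ℝ := fun x' a' =>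
      if x' ∈ G then 0 else Qb (some x') (some a') - Q x' a' with hd
    set M := Finset.sup' Finset.univ huniv (fun p : X × A => |d p.1 p.2|) with hM
    have hsup : ∀ (x' : X) (a' : A), |d x' a'| ≤ M := by
      intro x' a'
      rw [hM]
      exact Finset.le_sup' (fun p : X × A => |d p.1 p.2|) (Finset.mem_univ (x', a'))
    have hMnn : 0 ≤ M := le_trans (abs_nonneg (d x a)) (hsup x a)
    have hdle : ∀ (x' : X) (a' : A), |d x' a'| ≤ γ * M := by
      intro x' a'
      by_cases hx : x' ∈ G
      · simp only [hd, if_pos hx, abs_zero]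
        positivity
      · have hdrec : d x' a' = γ * pexp (P x' a')
            (fun x'' => if x'' ∈ G then 0 else pexp (π x'') (d x'')) := by
          simp only [hd, if_neg hx]
          rw [key x' a', hQ x' a', if_neg hx, ← mul_sub, ← pexp_sub]
          refine congrArg (fun t => γ * t) (pexp_congr _ fun x'' => ?_)
          by_cases hx'' : x'' ∈ G
          · simp [hx'', hQG x'' hx'']
          · simp only [hx'', if_false, ← pexp_sub]
        rw [hdrec, abs_mul, abs_of_nonneg hγ0]
        refine mul_le_mul_of_nonneg_left ?_ hγ0
        refine abs_pexp_le _ fun x'' => ?_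
        by_cases hx'' : x'' ∈ G
        · simpa [hx''] using hMnn
        · simp only [hx'', if_false]
          exact abs_pexp_le _ fun a'' => hsup x'' a''
    have hMle : M ≤ γ * M := by
      rw [hM]
      exact Finset.sup'_le _ _ fun p _ => hdle p.1 p.2
    have hM0 : M = 0 := by nlinarith
    intro x' a' hx'
    have h1 : |d x' a'| ≤ 0 := hM0 ▸ hsup x' a'
    have h2 : d x' a' = 0 := abs_eq_zero.mp (le_antisymm h1 (abs_nonneg _))
    simpa [hd, hx'] using sub_eq_zero.mp (by simpa [hd, hx'] using h2)
  -- Assemble part 1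
  rw [key x a]
  refine congrArg (fun t => γ * t) (pexp_congr _ fun x' => ?_)
  by_cases hx' : x' ∈ G
  · rw [if_pos hx', if_pos hx', hQG x' hx', max_self]
  · rw [if_neg hx', if_neg hx']
    rw [pexp_congr (π x') fun a' => hD x' a' hx']
    exact (max_eq_right (le_pexp_of_le _ fun a' => hQnn x' a')).symm
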